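/- Corollary 1 (estimating the discrepancy from finite samples): Let P and ℙ be probability measures on X, let H be a set of measurable maps X → ℝ, let q ≥ 1, and consider the loss L(y, y') := |y − y'|^q, assumed bounded above by a constant M > 0 on all values taken by maps in H; define disc_L(μ, ν) := sup_{(h,h') ∈ H × H} | ∫ L(h' x, h x) dμ(x) − ∫ L(h' x, h x) dν(x) |, and assume all suprema involved are measurable functions of the samples. For a sample U = (x₁,…,x_m) ∈ X^m let its empirical measure be (1/m) ∑ δ_{x_i} and its empirical Rademacher complexity be Re_U(H) := E_σ [ sup_{h ∈ H} (2/m) ∑_{i=1}^m σ_i · h(x_i) ], the expectation over σ uniform on {−1,1}^m. Then for every δ ∈ (0,1), with probability at least 1 − δ over independent samples U_P ∼ P^{⊗ m_P} and U_ℙ ∼ ℙ^{⊗ m_ℙ} with empirical measures P̂ and ℙ̂: disc_L(P, ℙ) ≤ disc_L(P̂, ℙ̂) + 4q·( Re_{U_P}(H) + Re_{U_ℙ}(H) ) + 3M·( √(log(4/δ)/(2 m_P)) + √(log(4/δ)/(2 m_ℙ)) ). -/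

import Mathlib

open MeasureTheory
open scoped ENNReal

/-- The discrepancy distance associated with the loss `L(y,y') = |y − y'|^q`:
`disc_L(μ,ν) = sup_{(h,h') ∈ H×H} | ∫ L(h' x, h x) dμ − ∫ L(h' x, h x) dν |`. -/
noncomputable def discL {X : Type*} [MeasurableSpace X]
    (H : Set (X → ℝ)) (q : ℝ) (μ ν : Measure X) : ℝ :=
  sSup {r : ℝ | ∃ h ∈ H, ∃ h' ∈ H,
    r = |(∫ x, |h' x - h x| ^ q ∂μ) - ∫ x, |h' x - h x| ^ q ∂ν|}

/-- The empirical measure `(1/m) ∑_{i=1}^m δ_{x_i}` of a sample `U`. -/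
noncomputable def empMeasure {X : Type*} [MeasurableSpace X] {m : ℕ}
    (U : Fin m → X) : Measure X :=
  (m : ℝ≥0∞)⁻¹ • ∑ i, Measure.dirac (U i)

/-- The empirical Rademacher complexity of `H` on the sample `U`:
`Re_U(H) = E_σ [ sup_{h ∈ H} (2/m) ∑_i σ_i · h(x_i) ]`,
the expectation over `σ` uniform on `{−1,1}^m`. -/
noncomputable def rademacher {X : Type*} {m : ℕ} (H : Set (X → ℝ))
    (U : Fin m → X) : ℝ :=
  (1 / 2 ^ m : ℝ) * ∑ σ : Fin m → Bool,
    sSup {r : ℝ | ∃ h ∈ H,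
      r = (2 / m : ℝ) * ∑ i, (if σ i then (1 : ℝ) else -1) * h (U i)}

/-! The left-hand side disc_L(P, ℙ) does not depend on the samples, so it suffices to control a
single pair (h, h') whose loss gap comes within M (s_P + s_ℙ) of it, where s_m = √(log(4/δ)/(2m)).
For that one bounded loss, Hoeffding's inequality puts each empirical mean within M s_m of the true
mean outside an event of probability δ/2, and on the remaining event the triangle inequality
yields the bound (even with 2M instead of 3M); the Rademacher terms enter only through their
nonnegativity. -/

open Real ProbabilityTheory

lemma integral_mem_Icc_of_mem_Icc {Ω : Type*} [MeasurableSpace Ω] {ρ : Measure Ω}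
    [IsProbabilityMeasure ρ] {f : Ω → ℝ} {M : ℝ} (hf : ∀ x, f x ∈ Set.Icc 0 M) :
    ∫ x, f x ∂ρ ∈ Set.Icc 0 M := by
  refine ⟨integral_nonneg fun x => (hf x).1, ?_⟩
  have := norm_integral_le_of_norm_le_const (μ := ρ)
    (ae_of_all _ fun x => (norm_of_nonneg (hf x).1).trans_le (hf x).2)
  simpa [norm_of_nonneg (integral_nonneg fun x => (hf x).1)] using this

lemma one_sub_le_prod_prod {α β : Type*} [MeasurableSpace α] [MeasurableSpace β]
    (μ : Measure α) (ν : Measure β) [IsProbabilityMeasure μ] [IsProbabilityMeasure ν]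
    (s : Set α) (t : Set β) :
    1 - (μ sᶜ + ν tᶜ) ≤ μ.prod ν (s ×ˢ t) := by
  have hcompl : μ.prod ν (s ×ˢ t)ᶜ ≤ μ sᶜ + ν tᶜ := by
    rw [Set.compl_prod_eq_union]
    refine (measure_union_le _ _).trans_eq ?_
    simp [Measure.prod_prod]
  rw [tsub_le_iff_right]
  calc 1 = μ.prod ν Set.univ := measure_univ.symm
    _ ≤ μ.prod ν (s ×ˢ t) + μ.prod ν (s ×ˢ t)ᶜ := measure_univ_le_add_compl _
    _ ≤ μ.prod ν (s ×ˢ t) + (μ sᶜ + ν tᶜ) := by gcongr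

lemma ofReal_one_sub_le_prod_of_prod_subset {α β : Type*} [MeasurableSpace α]
    [MeasurableSpace β] {μ : Measure α} {ν : Measure β} [IsProbabilityMeasure μ]
    [IsProbabilityMeasure ν] {s : Set α} {t : Set β} {S : Set (α × β)} (hst : s ×ˢ t ⊆ S)
    {δ : ℝ} (hδ : 0 ≤ δ) (hs : μ sᶜ ≤ ENNReal.ofReal (δ / 2))
    (ht : ν tᶜ ≤ ENNReal.ofReal (δ / 2)) :
    ENNReal.ofReal (1 - δ) ≤ μ.prod ν S :=
  calc ENNReal.ofReal (1 - δ) = 1 - (ENNReal.ofReal (δ / 2) + ENNReal.ofReal (δ / 2)) := by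
        rw [← ENNReal.ofReal_add (by positivity) (by positivity), add_halves,
          ENNReal.ofReal_sub _ hδ, ENNReal.ofReal_one]
    _ ≤ 1 - (μ sᶜ + ν tᶜ) := by gcongr
    _ ≤ μ.prod ν (s ×ˢ t) := one_sub_le_prod_prod μ ν s t
    _ ≤ μ.prod ν S := measure_mono hst

lemma le_max_one_of_rpow_le {x q M : ℝ} (hq : 1 ≤ q) (h : x ^ q ≤ M) : x ≤ max 1 M := by
  rcases le_total x 1 with hx1 | hx1
  · exact hx1.trans (le_max_left _ _)
  · exact (self_le_rpow_of_one_le hx1 hq).trans (h.trans (le_max_right _ _))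

namespace ProbabilityTheory.HasSubgaussianMGF

variable {Ω : Type*} [MeasurableSpace Ω] {μ : Measure Ω} {Y : Ω → ℝ} {c : NNReal}

lemma measureReal_abs_ge_le (h : HasSubgaussianMGF Y c μ) {ε : ℝ} (hε : 0 ≤ ε) :
    μ.real {ω | ε ≤ |Y ω|} ≤ 2 * exp (-ε ^ 2 / (2 * c)) := by
  have hsplit : {ω | ε ≤ |Y ω|} = {ω | ε ≤ Y ω} ∪ {ω | ε ≤ (-Y) ω} := by
    ext ω
    simp [le_abs', or_comm, le_neg]
  rw [hsplit, two_mul]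
  exact (measureReal_union_le _ _).trans
    (add_le_add (h.measure_ge_le hε) (h.neg.measure_ge_le hε))

end ProbabilityTheory.HasSubgaussianMGF

section Empirical

variable {X : Type*} [MeasurableSpace X]

lemma integral_empMeasure {m : ℕ} (U : Fin m → X) {g : X → ℝ} (hg : Measurable g) :
    ∫ x, g x ∂empMeasure U = (m : ℝ)⁻¹ * ∑ i, g (U i) := by
  rw [empMeasure, integral_smul_measure, integral_finsetSum_measure
    fun i _ => integrable_dirac' hg.stronglyMeasurable enorm_lt_top]
  simp [integral_dirac' _ _ hg.stronglyMeasurable, ENNReal.toReal_inv]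

lemma isProbabilityMeasure_empMeasure {m : ℕ} (hm : 0 < m) (U : Fin m → X) :
    IsProbabilityMeasure (empMeasure U) := by
  constructor
  simp [empMeasure, ENNReal.inv_mul_cancel (Nat.cast_ne_zero.2 hm.ne') (ENNReal.natCast_ne_top m)]

variable (μ : Measure X) [IsProbabilityMeasure μ] {g : X → ℝ}

lemma hasSubgaussianMGF_sum_sub_integral_pi (hg : Measurable g) {a b : ℝ}
    (hab : ∀ x, g x ∈ Set.Icc a b) (m : ℕ) :
    HasSubgaussianMGF (fun U : Fin m → X => ∑ i, (g (U i) - ∫ x, g x ∂μ))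
      (m * (‖b - a‖₊ / 2) ^ 2) (Measure.pi fun _ : Fin m => μ) := by
  have hindep := iIndepFun_pi (Ω := fun _ : Fin m => X) (μ := fun _ => μ)
    (X := fun _ x => g x - ∫ x, g x ∂μ) fun _ => (hg.sub_const _).aemeasurable
  have hcoord : ∀ i : Fin m, HasSubgaussianMGF (fun U : Fin m → X => g (U i) - ∫ x, g x ∂μ)
      ((‖b - a‖₊ / 2) ^ 2) (Measure.pi fun _ : Fin m => μ) := by
    intro i
    refine HasSubgaussianMGF.of_map (X := fun x => g x - ∫ x, g x ∂μ)
      (Y := fun U : Fin m → X => U i) (measurable_pi_apply i).aemeasurable ?_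
    rw [(measurePreserving_eval (fun _ : Fin m => μ) i).map_eq]
    exact hasSubgaussianMGF_of_mem_Icc hg.aemeasurable (ae_of_all _ hab)
  simpa using HasSubgaussianMGF.sum_of_iIndepFun hindep
    (c := fun _ => (‖b - a‖₊ / 2) ^ 2) (s := Finset.univ) fun i _ => hcoord i

lemma measure_le_abs_integral_empMeasure_sub_le (hg : Measurable g) {a b : ℝ}
    (hab : ∀ x, g x ∈ Set.Icc a b) {m : ℕ} (hm : 0 < m) {t : ℝ} (ht : 0 ≤ t) :
    (Measure.pi fun _ : Fin m => μ) {U | t ≤ |∫ x, g x ∂empMeasure U - ∫ x, g x ∂μ|}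
      ≤ ENNReal.ofReal (2 * exp (-2 * m * t ^ 2 / (b - a) ^ 2)) := by
  have hm' : (0 : ℝ) < m := Nat.cast_pos.2 hm
  have hset : {U : Fin m → X | t ≤ |∫ x, g x ∂empMeasure U - ∫ x, g x ∂μ|}
      = {U | m * t ≤ |∑ i, (g (U i) - ∫ x, g x ∂μ)|} := by
    ext U
    have hmean : ∫ x, g x ∂empMeasure U - ∫ x, g x ∂μ = (∑ i, (g (U i) - ∫ x, g x ∂μ)) / m := by
      rw [integral_empMeasure U hg, Finset.sum_sub_distrib]
      simp only [Finset.sum_const, Finset.card_univ, Fintype.card_fin, nsmul_eq_mul]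
      field_simp
    simp only [Set.mem_ofPred_eq, hmean, abs_div, Nat.abs_cast, le_div_iff₀ hm', mul_comm]
  -- `b = a` is harmless: both sides are then `exp (x / 0) = exp 0`.
  have hexp : -(m * t) ^ 2 / (2 * ((m * (‖b - a‖₊ / 2) ^ 2 : NNReal) : ℝ))
      = -2 * m * t ^ 2 / (b - a) ^ 2 := by
    rw [show 2 * ((m * (‖b - a‖₊ / 2) ^ 2 : NNReal) : ℝ) = (m / 2) * (b - a) ^ 2 by
      push_cast; rw [Real.norm_eq_abs, div_pow, sq_abs]; ring, ← div_div]
    congr 1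
    field_simp
  rw [hset, ← ofReal_measureReal, ← hexp]
  exact ENNReal.ofReal_le_ofReal
    ((hasSubgaussianMGF_sum_sub_integral_pi μ hg hab m).measureReal_abs_ge_le (by positivity))

lemma measure_compl_abs_integral_empMeasure_sub_le_le (hg : Measurable g) {M : ℝ} (hM : 0 < M)
    (hgM : ∀ x, g x ∈ Set.Icc 0 M) {m : ℕ} (hm : 0 < m) {δ : ℝ} (hδ : 0 < δ) (hδ4 : δ ≤ 4) :
    (Measure.pi fun _ : Fin m => μ)
        {U | |∫ x, g x ∂empMeasure U - ∫ x, g x ∂μ| ≤ M * √(log (4 / δ) / (2 * m))}ᶜ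
      ≤ ENNReal.ofReal (δ / 2) := by
  have hm' : (0 : ℝ) < m := Nat.cast_pos.2 hm
  have hlog : 0 ≤ log (4 / δ) := log_nonneg (by rw [le_div_iff₀ hδ]; linarith)
  have hexp : 2 * exp (-2 * m * (M * √(log (4 / δ) / (2 * m))) ^ 2 / (M - 0) ^ 2) = δ / 2 := by
    rw [sub_zero, mul_pow, sq_sqrt (by positivity),
      show -2 * m * (M ^ 2 * (log (4 / δ) / (2 * m))) / M ^ 2 = -log (4 / δ) by field_simp,
      exp_neg, exp_log (by positivity)]
    field_simp
    ring
  set t := M * √(log (4 / δ) / (2 * m))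
  calc _ ≤ (Measure.pi fun _ : Fin m => μ)
        {U | t ≤ |∫ x, g x ∂empMeasure U - ∫ x, g x ∂μ|} :=
          measure_mono fun U hU => by
            simp only [Set.mem_compl_iff, Set.mem_ofPred_eq, not_le] at hU ⊢
            exact hU.le
    _ ≤ _ := measure_le_abs_integral_empMeasure_sub_le μ hg hgM hm (by positivity)
    _ = _ := by rw [hexp]

end Empirical

section Discrepancy

variable {X : Type*} [MeasurableSpace X] {H : Set (X → ℝ)} {q : ℝ} {μ ν : Measure X}

lemma discL_nonneg : 0 ≤ discL H q μ ν :=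
  Real.sSup_nonneg fun _ ⟨_, _, _, _, hr⟩ => hr ▸ abs_nonneg _

lemma abs_integral_sub_integral_le_discL {M : ℝ}
    (hbound : ∀ h ∈ H, ∀ h' ∈ H, ∀ x, |h' x - h x| ^ q ≤ M)
    [IsProbabilityMeasure μ] [IsProbabilityMeasure ν] {h h' : X → ℝ} (hh : h ∈ H) (hh' : h' ∈ H) :
    |∫ x, |h' x - h x| ^ q ∂μ - ∫ x, |h' x - h x| ^ q ∂ν| ≤ discL H q μ ν := by
  refine le_csSup ⟨M, ?_⟩ ⟨h, hh, h', hh', rfl⟩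
  rintro r ⟨h, hh, h', hh', rfl⟩
  have hloss : ∀ x, |h' x - h x| ^ q ∈ Set.Icc 0 M :=
    fun x => ⟨rpow_nonneg (abs_nonneg _) q, hbound h hh h' hh' x⟩
  obtain ⟨hμ0, hμM⟩ := integral_mem_Icc_of_mem_Icc (ρ := μ) hloss
  obtain ⟨hν0, hνM⟩ := integral_mem_Icc_of_mem_Icc (ρ := ν) hloss
  exact abs_sub_le_iff.2 ⟨by linarith, by linarith⟩

lemma exists_lt_abs_integral_sub_integral_of_lt_discL {r : ℝ} (hr : 0 ≤ r)
    (hlt : r < discL H q μ ν) :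
    ∃ h ∈ H, ∃ h' ∈ H, r < |∫ x, |h' x - h x| ^ q ∂μ - ∫ x, |h' x - h x| ^ q ∂ν| := by
  obtain ⟨_, ⟨h, hh, h', hh', rfl⟩, hr'⟩ := exists_lt_of_lt_csSup
    (Set.nonempty_iff_ne_empty.2 fun hempty => by
      rw [discL, hempty, Real.sSup_empty] at hlt
      linarith) hlt
  exact ⟨h, hh, h', hh', hr'⟩

lemma discL_le_discL_add {μ' ν' : Measure X} [IsProbabilityMeasure μ'] [IsProbabilityMeasure ν']
    {M : ℝ} (hbound : ∀ h ∈ H, ∀ h' ∈ H, ∀ x, |h' x - h x| ^ q ≤ M)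
    {h h' : X → ℝ} (hh : h ∈ H) (hh' : h' ∈ H) {ε tμ tν : ℝ}
    (hgap : discL H q μ ν - ε < |∫ x, |h' x - h x| ^ q ∂μ - ∫ x, |h' x - h x| ^ q ∂ν|)
    (hμ : |∫ x, |h' x - h x| ^ q ∂μ' - ∫ x, |h' x - h x| ^ q ∂μ| ≤ tμ)
    (hν : |∫ x, |h' x - h x| ^ q ∂ν' - ∫ x, |h' x - h x| ^ q ∂ν| ≤ tν) :
    discL H q μ ν ≤ discL H q μ' ν' + ε + tμ + tν := by
  have hemp := abs_integral_sub_integral_le_discL (μ := μ') (ν := ν') hbound hh hh'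
  set a := ∫ x, |h' x - h x| ^ q ∂μ
  set b := ∫ x, |h' x - h x| ^ q ∂ν
  set a' := ∫ x, |h' x - h x| ^ q ∂μ'
  set b' := ∫ x, |h' x - h x| ^ q ∂ν'
  have htri : |a - b| ≤ |a' - a| + |a' - b'| + |b' - b| := by
    rw [abs_sub_comm a' a]
    exact (abs_sub_le _ b' _).trans (add_le_add_left (abs_sub_le _ _ _) _)
  linarith

end Discrepancy

lemma sum_sum_sign_mul_eq_zero {m : ℕ} (c : Fin m → ℝ) :
    ∑ σ : Fin m → Bool, ∑ i, (if σ i then (1 : ℝ) else -1) * c i = 0 := by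
  have hflip : Function.Involutive fun σ : Fin m → Bool => fun i => !σ i := fun σ => by
    simp
  set F : (Fin m → Bool) → ℝ := fun σ => ∑ i, (if σ i then (1 : ℝ) else -1) * c i
  have hneg : ∀ σ, F σ = -F fun i => !σ i := fun σ => by
    rw [← Finset.sum_neg_distrib]
    exact Finset.sum_congr rfl fun i _ => by by_cases hσ : σ i <;> simp [hσ]
  have := Fintype.sum_equiv hflip.toPerm F (fun σ => -F σ) hneg
  rw [Finset.sum_neg_distrib] at this
  linarith

lemma rademacher_nonneg {X : Type*} {H : Set (X → ℝ)} {C : ℝ}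
    (hC : ∀ h ∈ H, ∀ h' ∈ H, ∀ x, |h' x - h x| ≤ C) {m : ℕ} (U : Fin m → X) :
    0 ≤ rademacher H U := by
  rcases H.eq_empty_or_nonempty with rfl | ⟨h₀, hh₀⟩
  · simp [rademacher]
  refine mul_nonneg (by positivity) ?_
  rw [← mul_zero (2 / m : ℝ), ← sum_sum_sign_mul_eq_zero (h₀ ∘ U), Finset.mul_sum]
  refine Finset.sum_le_sum fun σ _ => le_csSup ⟨(2 / m : ℝ) * ∑ i, (|h₀ (U i)| + C), ?_⟩
    ⟨h₀, hh₀, rfl⟩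
  rintro r ⟨h, hh, rfl⟩
  gcongr with i
  calc (if σ i then (1 : ℝ) else -1) * h (U i) ≤ |h (U i)| := by
        cases σ i <;> simp [neg_le_abs, le_abs_self]
    _ ≤ |h₀ (U i)| + C := by
        linarith [abs_sub_abs_le_abs_sub (h (U i)) (h₀ (U i)), hC h₀ hh₀ h hh (U i)]

theorem stmt_18_general {X : Type*} [MeasurableSpace X]
    (P Pr : Measure X) [IsProbabilityMeasure P] [IsProbabilityMeasure Pr]
    (H : Set (X → ℝ)) (hH : ∀ g ∈ H, Measurable g)
    (q : ℝ) (hq : 1 ≤ q)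
    (M : ℝ) (hM : 0 < M)
    -- the loss is bounded above by M on all values taken by maps in H
    (hbound : ∀ h ∈ H, ∀ h' ∈ H, ∀ x : X, |h' x - h x| ^ q ≤ M)
    (mP mPr : ℕ) (hmP : 0 < mP) (hmPr : 0 < mPr)
    (δ : ℝ) (hδ : δ ∈ Set.Ioo (0 : ℝ) 1) :
    ENNReal.ofReal (1 - δ) ≤
      ((Measure.pi fun _ : Fin mP => P).prod (Measure.pi fun _ : Fin mPr => Pr))
        {UV : (Fin mP → X) × (Fin mPr → X) |
          discL H q P Pr
            ≤ discL H q (empMeasure UV.1) (empMeasure UV.2)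
              + 4 * q * (rademacher H UV.1 + rademacher H UV.2)
              + 3 * M * (Real.sqrt (Real.log (4 / δ) / (2 * mP))
                + Real.sqrt (Real.log (4 / δ) / (2 * mPr)))} := by
  obtain ⟨hδ0, hδ1⟩ := hδ
  set sP := √(log (4 / δ) / (2 * mP))
  set sPr := √(log (4 / δ) / (2 * mPr))
  have hslack : 0 < M * (sP + sPr) := by
    have : 0 < log (4 / δ) := log_pos (by rw [lt_div_iff₀ hδ0]; linarith)
    positivity
  have hrad : ∀ UV : (Fin mP → X) × (Fin mPr → X),
      0 ≤ 4 * q * (rademacher H UV.1 + rademacher H UV.2) := fun UV => by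
    have hC := fun h hh h' hh' x => le_max_one_of_rpow_le hq (hbound h hh h' hh' x)
    have := add_nonneg (rademacher_nonneg hC UV.1) (rademacher_nonneg hC UV.2)
    positivity
  rcases le_or_gt (discL H q P Pr) (M * (sP + sPr)) with hsmall | hlarge
  · refine ofReal_one_sub_le_prod_of_prod_subset (s := Set.univ) (t := Set.univ)
      (fun UV _ => ?_) hδ0.le (by simp) (by simp)
    rw [Set.mem_ofPred_eq]
    linarith [hrad UV, discL_nonneg (H := H) (q := q) (μ := empMeasure UV.1) (ν := empMeasure UV.2)]
  obtain ⟨h, hh, h', hh', hgap⟩ :=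
    exists_lt_abs_integral_sub_integral_of_lt_discL (sub_nonneg.2 hlarge.le) (sub_lt_self _ hslack)
  have hg : Measurable fun x => |h' x - h x| ^ q := ((hH h' hh').sub (hH h hh)).abs.pow_const q
  have hgM : ∀ x, |h' x - h x| ^ q ∈ Set.Icc 0 M :=
    fun x => ⟨rpow_nonneg (abs_nonneg _) q, hbound h hh h' hh' x⟩
  refine ofReal_one_sub_le_prod_of_prod_subset ?_ hδ0.le
    (measure_compl_abs_integral_empMeasure_sub_le_le P hg hM hgM hmP hδ0 (by linarith))
    (measure_compl_abs_integral_empMeasure_sub_le_le Pr hg hM hgM hmPr hδ0 (by linarith))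
  rintro ⟨U, V⟩ ⟨hU, hV⟩
  have := isProbabilityMeasure_empMeasure hmP U
  have := isProbabilityMeasure_empMeasure hmPr V
  rw [Set.mem_ofPred_eq]
  linarith [hrad (U, V), discL_le_discL_add hbound hh hh' hgap hU hV]

theorem stmt_18 {X : Type*} [MeasurableSpace X]
    (P Pr : Measure X) [IsProbabilityMeasure P] [IsProbabilityMeasure Pr]
    (H : Set (X → ℝ)) (hH : ∀ g ∈ H, Measurable g)
    (q : ℝ) (hq : 1 ≤ q)
    (M : ℝ) (hM : 0 < M)
    -- the loss is bounded above by M on all values taken by maps in H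
    (hbound : ∀ h ∈ H, ∀ h' ∈ H, ∀ x : X, |h' x - h x| ^ q ≤ M)
    (mP mPr : ℕ) (hmP : 0 < mP) (hmPr : 0 < mPr)
    -- measurability (in the samples) of the suprema involved
    (hmeas1 : Measurable fun UV : (Fin mP → X) × (Fin mPr → X) =>
      discL H q (empMeasure UV.1) (empMeasure UV.2))
    (hmeas2 : Measurable fun U : Fin mP → X => rademacher H U)
    (hmeas3 : Measurable fun V : Fin mPr → X => rademacher H V)
    (δ : ℝ) (hδ : δ ∈ Set.Ioo (0 : ℝ) 1) :
    ENNReal.ofReal (1 - δ) ≤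
      ((Measure.pi fun _ : Fin mP => P).prod (Measure.pi fun _ : Fin mPr => Pr))
        {UV : (Fin mP → X) × (Fin mPr → X) |
          discL H q P Pr
            ≤ discL H q (empMeasure UV.1) (empMeasure UV.2)
              + 4 * q * (rademacher H UV.1 + rademacher H UV.2)
              + 3 * M * (Real.sqrt (Real.log (4 / δ) / (2 * mP))
                + Real.sqrt (Real.log (4 / δ) / (2 * mPr)))} :=
  stmt_18_general P Pr H hH q hq M hM hbound mP mPr hmP hmPr δ hδ
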